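/- For every exp-matching E from ℝ⁺-exponent-string u to ℝ⁺-exponent-string v, there exists a finite exp-edit sequence K from u to v whose total cost W(K) equals the cost of E. Consequently the infimum of exp-edit sequence costs is at most the infimum of exp-matching costs. -/

import Mathlib

namespace ExpStr

variable {α S : Type*}

/-- Concatenation of exponent-string representations, merging the boundary
terms when the base characters coincide. -/
def eCat [DecidableEq α] (op : S → S → S) (p q : List (α × S)) : List (α × S) :=
  match p.getLast?, q with
  | some (a, s), (b, t) :: q' =>
      if a = b then p.dropLast ++ (a, op s t) :: q' else p ++ q
  | _, _ => p ++ q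

/-- The defining property of an `S`-exponent-string:
consecutive base characters differ. -/
def IsExp (l : List (α × S)) : Prop := l.Chain' (fun x y => x.1 ≠ y.1)

/-- The exponent-string corresponding to a representation. -/
def eRep [DecidableEq α] (op : S → S → S) : List (α × S) → List (α × S)
  | [] => []
  | x :: xs => eCat op [x] (eRep op xs)

end ExpStr

noncomputable section
namespace ExpStr
open MeasureTheory

variable {α : Type*}

/-- Length of an `ℝ⁺`-exponent-string: the sum of its exponents. -/
def eLen (l : List (α × ℝ)) : ℝ := (l.map Prod.snd).sum

/-- `ℝ⁺`-exponent-strings: consecutive base characters differ and all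
exponents are positive reals. -/
def RES (l : List (α × ℝ)) : Prop := IsExp l ∧ ∀ x ∈ l, 0 < x.2

/-- Concatenation of `ℝ⁺`-exponent-strings (exponents added at the boundary). -/
def rcat [DecidableEq α] (p q : List (α × ℝ)) : List (α × ℝ) :=
  eCat (· + ·) p q

/-- The `ℕ`-exponent-string (run-length encoding) corresponding to a word. -/
def ofWord [DecidableEq α] (w : List α) : List (α × ℝ) :=
  eRep (· + ·) (w.map fun a => (a, (1 : ℝ)))

/-- Multiply every exponent by `k`. -/
def scaleE (k : ℝ) (l : List (α × ℝ)) : List (α × ℝ) :=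
  l.map fun x => (x.1, k * x.2)

/-- The base character of the position `x` in an `ℝ⁺`-exponent-string. -/
def charAt [Inhabited α] : List (α × ℝ) → ℝ → α
  | [], _ => default
  | (a, s) :: t, x => if x < s then a else charAt t (x - s)

/-- A single exp-edit operation applied to an infix, with its cost:
insertion `λ → a^q`, deletion `a^q → λ`, or substitution `a^q → b^q`. -/
def Step [DecidableEq α] (wdel wins : α → ℝ) (wsub : α → α → ℝ)
    (u v : List (α × ℝ)) (c : ℝ) : Prop :=
  ∃ p₁ p₂ : List (α × ℝ), RES p₁ ∧ RES p₂ ∧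
    ((∃ a q, 0 < q ∧ u = rcat p₁ p₂ ∧ v = rcat p₁ (rcat [(a, q)] p₂) ∧
        c = q * wins a) ∨
     (∃ a q, 0 < q ∧ u = rcat p₁ (rcat [(a, q)] p₂) ∧ v = rcat p₁ p₂ ∧
        c = q * wdel a) ∨
     (∃ a b q, 0 < q ∧ u = rcat p₁ (rcat [(a, q)] p₂) ∧
        v = rcat p₁ (rcat [(b, q)] p₂) ∧ c = q * wsub a b))

/-- `EditCost wdel wins wsub u v c` holds iff there is a finite exp-edit
sequence from `u` to `v` of total cost `c`. -/
inductive EditCost [DecidableEq α] (wdel wins : α → ℝ) (wsub : α → α → ℝ)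
    (u : List (α × ℝ)) : List (α × ℝ) → ℝ → Prop
  | refl : EditCost wdel wins wsub u u 0
  | step {p q : List (α × ℝ)} {c c' : ℝ} :
      EditCost wdel wins wsub u p c → Step wdel wins wsub p q c' →
      EditCost wdel wins wsub u q (c + c')

/-- Exp-edit distance: the infimum cost of exp-edit sequences. -/
def eDist [DecidableEq α] (wdel wins : α → ℝ) (wsub : α → α → ℝ)
    (u v : List (α × ℝ)) : ℝ :=
  sInf {c | EditCost wdel wins wsub u v c}

/-- Exp-edit sequences all of whose intermediate terms satisfy `P`. -/
inductive EditCostIn [DecidableEq α] (P : List (α × ℝ) → Prop)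
    (wdel wins : α → ℝ) (wsub : α → α → ℝ)
    (u : List (α × ℝ)) : List (α × ℝ) → ℝ → Prop
  | refl : EditCostIn P wdel wins wsub u u 0
  | step {p q : List (α × ℝ)} {c c' : ℝ} :
      EditCostIn P wdel wins wsub u p c → Step wdel wins wsub p q c' → P q →
      EditCostIn P wdel wins wsub u q (c + c')

/-- All exponents are positive integers. -/
def IntExp (l : List (α × ℝ)) : Prop := ∀ x ∈ l, ∃ n : ℕ, x.2 = n

/-- All exponents are (positive) rationals. -/
def RatExp (l : List (α × ℝ)) : Prop := ∀ x ∈ l, ∃ r : ℚ, x.2 = r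

/-- A single classical string edit operation with its cost. -/
def SStep (wdel wins : α → ℝ) (wsub : α → α → ℝ) (u v : List α) (c : ℝ) : Prop :=
  ∃ p₁ p₂ : List α,
    ((∃ a, u = p₁ ++ p₂ ∧ v = p₁ ++ a :: p₂ ∧ c = wins a) ∨
     (∃ a, u = p₁ ++ a :: p₂ ∧ v = p₁ ++ p₂ ∧ c = wdel a) ∨
     (∃ a b, u = p₁ ++ a :: p₂ ∧ v = p₁ ++ b :: p₂ ∧ c = wsub a b))

/-- Total costs of classical string edit sequences. -/
inductive SEditCost (wdel wins : α → ℝ) (wsub : α → α → ℝ) (u : List α) :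
    List α → ℝ → Prop
  | refl : SEditCost wdel wins wsub u u 0
  | step {p q : List α} {c c' : ℝ} :
      SEditCost wdel wins wsub u p c → SStep wdel wins wsub p q c' →
      SEditCost wdel wins wsub u q (c + c')

/-- Classical string edit distance. -/
def sDist (wdel wins : α → ℝ) (wsub : α → α → ℝ) (u v : List α) : ℝ :=
  sInf {c | SEditCost wdel wins wsub u v c}

/-- X-projection of a diagonal segment `(x₀, y₀, t)`. -/
def mSegX (m : ℝ × ℝ × ℝ) : Set ℝ := Set.Ico m.1 (m.1 + m.2.2)

/-- Y-projection of a diagonal segment `(x₀, y₀, t)`. -/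
def mSegY (m : ℝ × ℝ × ℝ) : Set ℝ := Set.Ico m.2.1 (m.2.1 + m.2.2)

/-- X-projection of a matching. -/
def mEX (M : List (ℝ × ℝ × ℝ)) : Set ℝ := ⋃ m ∈ M, mSegX m

/-- Y-projection of a matching. -/
def mEY (M : List (ℝ × ℝ × ℝ)) : Set ℝ := ⋃ m ∈ M, mSegY m

/-- An exp-matching: a finite family of diagonal segments, each given as
`(x₀, y₀, t)` (start point and length parameter), lying in `[0,L₁)×[0,L₂)`,
with pairwise disjoint axis projections, and monotone. -/
def IsMatching (L₁ L₂ : ℝ) (M : List (ℝ × ℝ × ℝ)) : Prop :=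
  (∀ m ∈ M, 0 < m.2.2 ∧ 0 ≤ m.1 ∧ 0 ≤ m.2.1 ∧
      m.1 + m.2.2 ≤ L₁ ∧ m.2.1 + m.2.2 ≤ L₂) ∧
  M.Pairwise (fun m m' =>
      Disjoint (mSegX m) (mSegX m') ∧ Disjoint (mSegY m) (mSegY m')) ∧
  (∀ m ∈ M, ∀ m' ∈ M, ∀ s s' : ℝ, 0 ≤ s → s < m.2.2 → 0 ≤ s' → s' < m'.2.2 →
      m.1 + s < m'.1 + s' → m.2.1 + s ≤ m'.2.1 + s')

/-- Cost of an exp-matching: deletion and insertion integrals over the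
unmatched positions plus the substitution (arc-length) integral over the
segments (the factor `1/√2` cancels the speed `√2` of the parametrization). -/
def mCost [Inhabited α] (wdel wins : α → ℝ) (wsub : α → α → ℝ)
    (p₁ p₂ : List (α × ℝ)) (M : List (ℝ × ℝ × ℝ)) : ℝ :=
  (∫ x in Set.Ico 0 (eLen p₁) \ mEX M, wdel (charAt p₁ x)) +
  (∫ y in Set.Ico 0 (eLen p₂) \ mEY M, wins (charAt p₂ y)) +
  (M.map fun m => ∫ s in (0 : ℝ)..m.2.2,
      wsub (charAt p₁ (m.1 + s)) (charAt p₂ (m.2.1 + s))).sum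

end ExpStr
end


/-!
The cost of a matching is the cost of deleting all of `u` and inserting all of `v`, corrected by
one integral per segment (substitution minus deletion and insertion along it); this uses only that
the projections of the segments are disjoint. Ordered by their starting points, the segments of a
matching form a chain, each ending in both coordinates before the next one starts. Cutting `u` and
`v` at the last segment `(x, y, t)` into a prefix, a block of length `t` and a remainder, the
prefixes are edited by induction, the blocks are substituted run by run, at the cost of the
substitution integral, and the remainders are deleted and inserted. The costs add up because
concatenation adds the costs of runs.
-/

open MeasureTheory Set

theorem setIntegral_Ico_eq_intervalIntegral {f : ℝ → ℝ} {a b : ℝ} (hab : a ≤ b) :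
    ∫ x in Ico a b, f x = ∫ x in a..b, f x := by
  rw [intervalIntegral.integral_of_le hab, integral_Ico_eq_integral_Ioo,
    integral_Ioc_eq_integral_Ioo]

theorem measurableSet_biUnion_Ico {ι : Type*} (I : List ι) (a b : ι → ℝ) :
    MeasurableSet (⋃ i ∈ I, Ico (a i) (b i)) :=
  MeasurableSet.biUnion I.finite_toSet.countable fun _ _ => measurableSet_Ico

theorem setIntegral_biUnion_Ico {ι : Type*} {f : ℝ → ℝ} {S : Set ℝ} (hf : IntegrableOn f S)
    {I : List ι} {a b : ι → ℝ} (hab : ∀ i ∈ I, a i ≤ b i) (hIS : ∀ i ∈ I, Ico (a i) (b i) ⊆ S)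
    (hI : I.Pairwise fun i j => Disjoint (Ico (a i) (b i)) (Ico (a j) (b j))) :
    ∫ x in ⋃ i ∈ I, Ico (a i) (b i), f x = (I.map fun i => ∫ x in a i..b i, f x).sum := by
  induction I with
  | nil => simp
  | cons i I ih =>
    simp only [List.forall_mem_cons, List.pairwise_cons] at hab hIS hI
    rw [List.map_cons, List.sum_cons, ← ih hab.2 hIS.2 hI.2,
      ← setIntegral_Ico_eq_intervalIntegral hab.1, ← setIntegral_union
        (disjoint_iUnion₂_right.mpr hI.1) (measurableSet_biUnion_Ico I a b)
        (hf.mono_set hIS.1) (hf.mono_set (iUnion₂_subset hIS.2))]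
    simp [iUnion_or, iUnion_union_distrib]

theorem setIntegral_diff_biUnion_Ico {ι : Type*} {f : ℝ → ℝ} {S : Set ℝ}
    (hf : IntegrableOn f S) {I : List ι} {a b : ι → ℝ} (hab : ∀ i ∈ I, a i ≤ b i)
    (hIS : ∀ i ∈ I, Ico (a i) (b i) ⊆ S)
    (hI : I.Pairwise fun i j => Disjoint (Ico (a i) (b i)) (Ico (a j) (b j))) :
    ∫ x in S \ ⋃ i ∈ I, Ico (a i) (b i), f x =
      (∫ x in S, f x) - (I.map fun i => ∫ x in a i..b i, f x).sum := by
  rw [← setIntegral_biUnion_Ico hf hab hIS hI]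
  exact setIntegral_sdiff (measurableSet_biUnion_Ico I a b) hf (iUnion₂_subset hIS)

theorem add_le_of_disjoint_Ico {a b s t : ℝ} (h : Disjoint (Ico a (a + s)) (Ico b (b + t)))
    (hab : a ≤ b) (ht : 0 < t) : a + s ≤ b := by
  by_contra! hlt
  exact Set.disjoint_left.mp h ⟨hab, hlt⟩ ⟨le_rfl, by linarith⟩

namespace ExpStr

variable {α : Type*}

/-! ### Exponent-strings and their concatenation -/

theorem isExp_iff_isChain_map_fst {S : Type*} {l : List (α × S)} :
    IsExp l ↔ (l.map Prod.fst).IsChain (· ≠ ·) :=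
  (List.isChain_map Prod.fst).symm

theorem RES.nil : RES ([] : List (α × ℝ)) := ⟨List.isChain_nil, by simp⟩

theorem RES.singleton (a : α) {s : ℝ} (hs : 0 < s) : RES [(a, s)] :=
  ⟨List.isChain_singleton _, by simpa using hs⟩

theorem RES.tail {x : α × ℝ} {u : List (α × ℝ)} (h : RES (x :: u)) : RES u :=
  ⟨h.1.tail, fun y hy => h.2 y (List.mem_cons_of_mem _ hy)⟩

@[simp] theorem eLen_nil : eLen ([] : List (α × ℝ)) = 0 := rfl

@[simp] theorem eLen_cons (a : α) (s : ℝ) (u : List (α × ℝ)) :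
    eLen ((a, s) :: u) = s + eLen u := by
  simp [eLen]

theorem eLen_nonneg {u : List (α × ℝ)} (hu : ∀ x ∈ u, 0 ≤ x.2) : 0 ≤ eLen u :=
  List.sum_nonneg (by simpa using fun s a h => hu (a, s) h)

theorem RES.eLen_pos {u : List (α × ℝ)} (hu : RES u) (hne : u ≠ []) : 0 < eLen u := by
  obtain ⟨⟨a, s⟩, t, rfl⟩ := List.exists_cons_of_ne_nil hne
  rw [eLen_cons]
  linarith [hu.2 (a, s) (by simp), eLen_nonneg fun x hx => (hu.tail.2 x hx).le]

def runCost (g : α → ℝ) (u : List (α × ℝ)) : ℝ := (u.map fun x => x.2 * g x.1).sum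

@[simp] theorem runCost_nil (g : α → ℝ) : runCost g [] = 0 := rfl

@[simp] theorem runCost_cons (g : α → ℝ) (a : α) (s : ℝ) (u : List (α × ℝ)) :
    runCost g ((a, s) :: u) = s * g a + runCost g u := rfl

@[simp] theorem runCost_append (g : α → ℝ) (p q : List (α × ℝ)) :
    runCost g (p ++ q) = runCost g p + runCost g q := by
  simp [runCost]

section DecidableEq

variable [DecidableEq α]

@[simp] theorem nil_rcat (q : List (α × ℝ)) : rcat [] q = q := by
  simp [rcat, eCat]

@[simp] theorem rcat_nil (p : List (α × ℝ)) : rcat p [] = p := by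
  unfold rcat eCat
  split <;> simp_all

theorem singleton_rcat_cons (a b : α) (s t : ℝ) (q : List (α × ℝ)) :
    rcat [(a, s)] ((b, t) :: q) =
      if a = b then (a, s + t) :: q else (a, s) :: (b, t) :: q := by
  simp [rcat, eCat]

theorem append_rcat (p q r : List (α × ℝ)) (hq : q ≠ []) :
    rcat (p ++ q) r = p ++ rcat q r := by
  unfold rcat eCat
  rw [List.getLast?_append_of_ne_nil _ hq]
  split
  · split_ifs <;> simp [List.dropLast_append_of_ne_nil hq]
  · simp

theorem cons_rcat (x : α × ℝ) {q : List (α × ℝ)} (hq : q ≠ []) (r : List (α × ℝ)) :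
    rcat (x :: q) r = x :: rcat q r :=
  append_rcat [x] q r hq

theorem concat_rcat_cons (p q : List (α × ℝ)) (a b : α) (s t : ℝ) :
    rcat (p ++ [(a, s)]) ((b, t) :: q) =
      if a = b then p ++ (a, s + t) :: q else p ++ (a, s) :: (b, t) :: q := by
  rw [append_rcat p [(a, s)] _ (by simp), singleton_rcat_cons]
  split_ifs <;> rfl

theorem singleton_rcat_eq_cons {x : α × ℝ} {u : List (α × ℝ)} (h : IsExp (x :: u)) :
    rcat [x] u = x :: u := by
  rcases u with _ | ⟨⟨b, t⟩, u⟩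
  · simp
  obtain ⟨a, s⟩ := x
  rw [singleton_rcat_cons, if_neg (List.isChain_cons_cons.mp h).1]

theorem rcat_ne_nil {p : List (α × ℝ)} (hp : p ≠ []) (q : List (α × ℝ)) : rcat p q ≠ [] := by
  unfold rcat eCat
  split
  · split_ifs <;> simp
  · simp_all

theorem rcat_assoc (p q r : List (α × ℝ)) : rcat (rcat p q) r = rcat p (rcat q r) := by
  rcases List.eq_nil_or_concat' p with rfl | ⟨p, ⟨a, s⟩, rfl⟩
  · simp
  rcases q with _ | ⟨⟨b, t⟩, q⟩
  · simp
  rw [append_rcat p [(a, s)] _ (by simp), append_rcat p _ _ (rcat_ne_nil (by simp) _),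
    append_rcat p [(a, s)] _ (by simp)]
  congr 1
  rcases q with _ | ⟨y, q⟩
  · rcases r with _ | ⟨⟨c, u⟩, r⟩
    · simp
    rw [singleton_rcat_cons b c]
    split_ifs with hbc <;> rw [singleton_rcat_cons a b] <;> split_ifs with hab <;>
      simp_all [singleton_rcat_cons, cons_rcat, add_assoc]
  · rw [cons_rcat (b, t) (q := y :: q) (by simp), singleton_rcat_cons, singleton_rcat_cons]
    split_ifs <;> simp [cons_rcat]

theorem RES.rcat {p q : List (α × ℝ)} (hp : RES p) (hq : RES q) : RES (rcat p q) := by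
  rcases List.eq_nil_or_concat' p with rfl | ⟨p, ⟨a, s⟩, rfl⟩
  · simpa
  rcases q with _ | ⟨⟨b, t⟩, q⟩
  · simpa
  have hs : 0 < s := hp.2 (a, s) (by simp)
  have ht : 0 < t := hq.2 (b, t) (by simp)
  obtain ⟨hpe, hppos⟩ := hp
  obtain ⟨hqe, hqpos⟩ := hq
  rw [concat_rcat_cons]
  split_ifs with hab
  · subst hab
    rw [isExp_iff_isChain_map_fst] at hpe hqe
    refine ⟨?_, ?_⟩
    · rw [isExp_iff_isChain_map_fst]
      simpa using (show (p.map Prod.fst ++ [a]).IsChain (· ≠ ·) by simpa using hpe).append_overlap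
        (l₂ := [a]) (by simpa using hqe) (by simp)
    · simp only [List.mem_append, List.mem_cons] at hppos hqpos ⊢
      rintro x (hx | rfl | hx)
      · exact hppos x (Or.inl hx)
      · exact add_pos hs ht
      · exact hqpos x (Or.inr hx)
  · refine ⟨List.isChain_append_cons_cons.mpr ⟨hpe, hab, hqe⟩, fun x hx => ?_⟩
    rw [← List.singleton_append, ← List.append_assoc, List.mem_append] at hx
    exact hx.elim (hppos x) (hqpos x)

theorem runCost_rcat (g : α → ℝ) (p q : List (α × ℝ)) :
    runCost g (rcat p q) = runCost g p + runCost g q := by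
  rcases List.eq_nil_or_concat' p with rfl | ⟨p, ⟨a, s⟩, rfl⟩
  · simp
  rcases q with _ | ⟨⟨b, t⟩, q⟩
  · simp
  rw [concat_rcat_cons]
  split_ifs with hab
  · subst hab
    simp only [runCost_append, runCost_cons, runCost_nil]
    ring
  · simp only [runCost_append, runCost_cons, runCost_nil]
    ring

end DecidableEq

/-! ### Cutting an exponent-string at a position -/

noncomputable def eTake : ℝ → List (α × ℝ) → List (α × ℝ)
  | _, [] => []
  | x, (a, s) :: t => if x ≤ 0 then [] else if x < s then [(a, x)] else (a, s) :: eTake (x - s) t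

noncomputable def eDrop : ℝ → List (α × ℝ) → List (α × ℝ)
  | _, [] => []
  | x, (a, s) :: t =>
    if x ≤ 0 then (a, s) :: t else if x < s then (a, s - x) :: t else eDrop (x - s) t

theorem map_fst_eTake_prefix (x : ℝ) (u : List (α × ℝ)) :
    (eTake x u).map Prod.fst <+: u.map Prod.fst := by
  induction u generalizing x with
  | nil => simp [eTake]
  | cons y t ih =>
    obtain ⟨a, s⟩ := y
    simp only [eTake]
    split_ifs
    · exact List.nil_prefix
    · simp
    · simpa using ih (x - s)

theorem map_fst_eDrop_suffix (x : ℝ) (u : List (α × ℝ)) :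
    (eDrop x u).map Prod.fst <:+ u.map Prod.fst := by
  induction u generalizing x with
  | nil => simp [eDrop]
  | cons y t ih =>
    obtain ⟨a, s⟩ := y
    simp only [eDrop]
    split_ifs
    · exact List.suffix_refl _
    · exact List.suffix_refl _
    · exact (ih (x - s)).trans (List.suffix_cons _ _)

theorem RES.eTake {u : List (α × ℝ)} (hu : RES u) (x : ℝ) : RES (eTake x u) := by
  refine ⟨isExp_iff_isChain_map_fst.mpr
    ((isExp_iff_isChain_map_fst.mp hu.1).prefix (map_fst_eTake_prefix x u)), ?_⟩
  induction u generalizing x with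
  | nil => simp [ExpStr.eTake]
  | cons y t ih =>
    obtain ⟨a, s⟩ := y
    simp only [ExpStr.eTake]
    split_ifs with h0
    · simp
    · simpa using lt_of_not_ge h0
    · rintro z (_ | ⟨_, hz⟩)
      exacts [hu.2 (a, s) (by simp), ih hu.tail (x - s) z hz]

theorem RES.eDrop {u : List (α × ℝ)} (hu : RES u) (x : ℝ) : RES (eDrop x u) := by
  refine ⟨isExp_iff_isChain_map_fst.mpr
    ((isExp_iff_isChain_map_fst.mp hu.1).suffix (map_fst_eDrop_suffix x u)), ?_⟩
  induction u generalizing x with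
  | nil => simp [ExpStr.eDrop]
  | cons y t ih =>
    obtain ⟨a, s⟩ := y
    simp only [ExpStr.eDrop]
    split_ifs with h0 h1
    · exact hu.2
    · rintro z (_ | ⟨_, hz⟩)
      exacts [sub_pos.mpr h1, hu.2 z (List.mem_cons_of_mem _ hz)]
    · exact ih hu.tail (x - s)

theorem eLen_eTake {u : List (α × ℝ)} {x : ℝ} (h0 : 0 ≤ x) (h1 : x ≤ eLen u) :
    eLen (eTake x u) = x := by
  induction u generalizing x with
  | nil =>
    rw [eLen_nil] at h1
    simp [eTake, le_antisymm h1 h0]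
  | cons y t ih =>
    obtain ⟨a, s⟩ := y
    rw [eLen_cons] at h1
    simp only [eTake]
    split_ifs with hx hs
    · simp only [eLen_nil]
      linarith
    · simp [eLen]
    · rw [eLen_cons, ih (by linarith) (by linarith)]
      ring

theorem eLen_eDrop {u : List (α × ℝ)} {x : ℝ} (h0 : 0 ≤ x) (h1 : x ≤ eLen u) :
    eLen (eDrop x u) = eLen u - x := by
  induction u generalizing x with
  | nil =>
    rw [eLen_nil] at h1
    simp [eDrop, le_antisymm h1 h0]
  | cons y t ih =>
    obtain ⟨a, s⟩ := y
    rw [eLen_cons] at h1 ⊢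
    simp only [eDrop]
    split_ifs with hx hs
    · rw [eLen_cons, le_antisymm hx h0, sub_zero]
    · rw [eLen_cons]
      ring
    · rw [ih (by linarith) (by linarith)]
      ring

theorem charAt_cons [Inhabited α] (a : α) (s : ℝ) (u : List (α × ℝ)) (x : ℝ) :
    charAt ((a, s) :: u) x = if x < s then a else charAt u (x - s) := rfl

theorem charAt_eTake [Inhabited α] {u : List (α × ℝ)} {x y : ℝ} (h0 : 0 ≤ y) (h1 : y < x) :
    charAt (eTake x u) y = charAt u y := by
  induction u generalizing x y with
  | nil => rfl
  | cons z t ih =>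
    obtain ⟨a, s⟩ := z
    have hx : ¬x ≤ 0 := by linarith
    by_cases hxs : x < s
    · simp only [eTake, if_neg hx, if_pos hxs, charAt_cons, if_pos h1,
        if_pos (show y < s by linarith)]
    · simp only [eTake, if_neg hx, if_neg hxs, charAt_cons]
      split_ifs with hys
      · rfl
      · exact ih (by linarith) (by linarith)

theorem charAt_eDrop [Inhabited α] {u : List (α × ℝ)} {x y : ℝ} (hx : 0 ≤ x) (hy : 0 ≤ y) :
    charAt (eDrop x u) y = charAt u (x + y) := by
  induction u generalizing x y with
  | nil => rfl
  | cons z t ih =>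
    obtain ⟨a, s⟩ := z
    by_cases h0 : x ≤ 0
    · obtain rfl : x = 0 := le_antisymm h0 hx
      simp [eDrop]
    by_cases hxs : x < s
    · have hys : y < s - x ↔ x + y < s := by constructor <;> intro <;> linarith
      simp only [eDrop, if_neg h0, if_pos hxs, charAt_cons, hys,
        show y - (s - x) = x + y - s by ring]
    · simp only [eDrop, if_neg h0, if_neg hxs, charAt_cons,
        if_neg (show ¬x + y < s by linarith)]
      rw [ih (by linarith) hy, sub_add_eq_add_sub]

theorem rcat_eTake_eDrop [DecidableEq α] {u : List (α × ℝ)} (hu : IsExp u) (x : ℝ) :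
    rcat (eTake x u) (eDrop x u) = u := by
  induction u generalizing x with
  | nil => simp [eTake, eDrop]
  | cons y t ih =>
    obtain ⟨a, s⟩ := y
    simp only [eTake, eDrop]
    split_ifs with h0 h1
    · simp
    · simp [singleton_rcat_cons]
    · have ih' := ih hu.tail (x - s)
      rcases eq_or_ne (eTake (x - s) t) [] with he | he
      · rw [he, nil_rcat] at ih'
        rw [he, ih', singleton_rcat_eq_cons hu]
      · rw [cons_rcat _ he, ih']

theorem runCost_eq_eTake_add_eDrop [DecidableEq α] (g : α → ℝ) {u : List (α × ℝ)}
    (hu : IsExp u) (x : ℝ) : runCost g u = runCost g (eTake x u) + runCost g (eDrop x u) := by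
  rw [← runCost_rcat, rcat_eTake_eDrop hu]

/-! ### Integrals along an exponent-string -/

section Integral

variable [Inhabited α]

theorem exists_simpleFunc_eq_charAt (u : List (α × ℝ)) :
    ∃ f : SimpleFunc ℝ α, ⇑f = charAt u := by
  induction u with
  | nil => exact ⟨SimpleFunc.const ℝ default, rfl⟩
  | cons z t ih =>
    obtain ⟨a, s⟩ := z
    obtain ⟨f, hf⟩ := ih
    refine ⟨SimpleFunc.piecewise (Iio s) measurableSet_Iio (SimpleFunc.const ℝ a)
      (f.comp (· - s) (measurable_id.sub_const s)), ?_⟩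
    ext x
    simp [Set.piecewise, hf, charAt_cons]

theorem integrableOn_charAt₂ (k : α → α → ℝ) (u v : List (α × ℝ)) {s : Set ℝ}
    (hs : volume s ≠ ⊤) : IntegrableOn (fun x => k (charAt u x) (charAt v x)) s := by
  obtain ⟨f, hf⟩ := exists_simpleFunc_eq_charAt u
  obtain ⟨g, hg⟩ := exists_simpleFunc_eq_charAt v
  have : IsFiniteMeasure (volume.restrict s) := isFiniteMeasure_restrict.mpr hs
  rw [← hf, ← hg]
  exact ((f.pair g).map fun p => k p.1 p.2).integrable_of_isFiniteMeasure (μ := volume.restrict s)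

theorem integrableOn_charAt (g : α → ℝ) (u : List (α × ℝ)) {s : Set ℝ} (hs : volume s ≠ ⊤) :
    IntegrableOn (fun x => g (charAt u x)) s :=
  integrableOn_charAt₂ (fun a _ => g a) u u hs

theorem intervalIntegrable_charAt₂ (k : α → α → ℝ) (u v : List (α × ℝ)) (a b : ℝ) :
    IntervalIntegrable (fun x => k (charAt u x) (charAt v x)) volume a b :=
  ⟨integrableOn_charAt₂ k u v (by simp), integrableOn_charAt₂ k u v (by simp)⟩

theorem intervalIntegrable_charAt (g : α → ℝ) (u : List (α × ℝ)) (a b : ℝ) :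
    IntervalIntegrable (fun x => g (charAt u x)) volume a b :=
  ⟨integrableOn_charAt g u (by simp), integrableOn_charAt g u (by simp)⟩

theorem integral_charAt (g : α → ℝ) {u : List (α × ℝ)} (hu : ∀ x ∈ u, 0 ≤ x.2) :
    ∫ x in (0 : ℝ)..eLen u, g (charAt u x) = runCost g u := by
  induction u with
  | nil => simp
  | cons z t ih =>
    obtain ⟨a, s⟩ := z
    have hs : 0 ≤ s := hu (a, s) (by simp)
    have ht : ∀ y ∈ t, 0 ≤ y.2 := fun y hy => hu y (List.mem_cons_of_mem _ hy)
    rw [eLen_cons, runCost_cons, ← intervalIntegral.integral_add_adjacent_intervals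
      (intervalIntegrable_charAt g _ 0 s) (intervalIntegrable_charAt g _ s (s + eLen t))]
    congr 1
    · rw [intervalIntegral.integral_congr_Ioo_of_le hs (g := fun _ => g a)
        (fun x hx => by simp [charAt_cons, hx.2])]
      simp
    · rw [intervalIntegral.integral_congr (g := fun x => g (charAt t (x - s)))
        (fun x hx => by
          rw [uIcc_of_le (by linarith [eLen_nonneg ht])] at hx
          simp [charAt_cons, not_lt.mpr hx.1])]
      rw [intervalIntegral.integral_comp_sub_right (fun x => g (charAt t x)), sub_self,
        add_sub_cancel_left]
      exact ih ht

end Integral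

/-! ### Edit sequences -/

section EditCost

variable [DecidableEq α] {wdel wins : α → ℝ} {wsub : α → α → ℝ}

theorem EditCost.trans {u v w : List (α × ℝ)} {c d : ℝ} (huv : EditCost wdel wins wsub u v c)
    (hvw : EditCost wdel wins wsub v w d) : EditCost wdel wins wsub u w (c + d) := by
  induction hvw with
  | refl => simpa using huv
  | step _ st ih => simpa [add_assoc] using ih.step st

theorem Step.editCost {u v : List (α × ℝ)} {c : ℝ} (st : Step wdel wins wsub u v c) :
    EditCost wdel wins wsub u v c := by
  simpa using EditCost.refl.step st

theorem Step.rcat_left {w u v : List (α × ℝ)} {c : ℝ} (hw : RES w)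
    (st : Step wdel wins wsub u v c) : Step wdel wins wsub (rcat w u) (rcat w v) c := by
  obtain ⟨p₁, p₂, h₁, h₂, hst⟩ := st
  refine ⟨rcat w p₁, p₂, hw.rcat h₁, h₂, ?_⟩
  rcases hst with ⟨a, q, hq, rfl, rfl, rfl⟩ | ⟨a, q, hq, rfl, rfl, rfl⟩ |
    ⟨a, b, q, hq, rfl, rfl, rfl⟩
  exacts [Or.inl ⟨a, q, hq, by simp only [rcat_assoc], by simp only [rcat_assoc], rfl⟩,
    Or.inr (Or.inl ⟨a, q, hq, by simp only [rcat_assoc], by simp only [rcat_assoc], rfl⟩),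
    Or.inr (Or.inr ⟨a, b, q, hq, by simp only [rcat_assoc], by simp only [rcat_assoc], rfl⟩)]

theorem Step.rcat_right {w u v : List (α × ℝ)} {c : ℝ} (hw : RES w)
    (st : Step wdel wins wsub u v c) : Step wdel wins wsub (rcat u w) (rcat v w) c := by
  obtain ⟨p₁, p₂, h₁, h₂, hst⟩ := st
  refine ⟨p₁, rcat p₂ w, h₁, h₂.rcat hw, ?_⟩
  rcases hst with ⟨a, q, hq, rfl, rfl, rfl⟩ | ⟨a, q, hq, rfl, rfl, rfl⟩ |
    ⟨a, b, q, hq, rfl, rfl, rfl⟩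
  exacts [Or.inl ⟨a, q, hq, by simp only [rcat_assoc], by simp only [rcat_assoc], rfl⟩,
    Or.inr (Or.inl ⟨a, q, hq, by simp only [rcat_assoc], by simp only [rcat_assoc], rfl⟩),
    Or.inr (Or.inr ⟨a, b, q, hq, by simp only [rcat_assoc], by simp only [rcat_assoc], rfl⟩)]

theorem EditCost.rcat {u₁ u₂ v₁ v₂ : List (α × ℝ)} {c₁ c₂ : ℝ} (hu₂ : RES u₂) (hv₁ : RES v₁)
    (h₁ : EditCost wdel wins wsub u₁ v₁ c₁) (h₂ : EditCost wdel wins wsub u₂ v₂ c₂) :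
    EditCost wdel wins wsub (ExpStr.rcat u₁ u₂) (ExpStr.rcat v₁ v₂) (c₁ + c₂) := by
  refine EditCost.trans (v := ExpStr.rcat v₁ u₂) ?_ ?_
  · clear hv₁
    induction h₁ with
    | refl => exact .refl
    | step _ st ih => exact ih.step (st.rcat_right hu₂)
  · induction h₂ with
    | refl => exact .refl
    | step _ st ih => exact ih.step (st.rcat_left hv₁)

theorem EditCost.nonneg (hdel : ∀ a, 0 ≤ wdel a) (hins : ∀ a, 0 ≤ wins a)
    (hsub : ∀ a b, 0 ≤ wsub a b) {u v : List (α × ℝ)} {c : ℝ}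
    (h : EditCost wdel wins wsub u v c) : 0 ≤ c := by
  induction h with
  | refl => rfl
  | step _ st ih =>
    obtain ⟨-, -, -, -, ⟨a, q, hq, -, -, rfl⟩ | ⟨a, q, hq, -, -, rfl⟩ |
      ⟨a, b, q, hq, -, -, rfl⟩⟩ := st
    · linarith [mul_nonneg hq.le (hins a)]
    · linarith [mul_nonneg hq.le (hdel a)]
    · linarith [mul_nonneg hq.le (hsub a b)]

theorem editCost_insert (a : α) {q : ℝ} (hq : 0 < q) :
    EditCost wdel wins wsub [] [(a, q)] (q * wins a) :=
  Step.editCost ⟨[], [], RES.nil, RES.nil, Or.inl ⟨a, q, hq, by simp, by simp, rfl⟩⟩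

theorem editCost_delete (a : α) {q : ℝ} (hq : 0 < q) :
    EditCost wdel wins wsub [(a, q)] [] (q * wdel a) :=
  Step.editCost ⟨[], [], RES.nil, RES.nil, Or.inr (Or.inl ⟨a, q, hq, by simp, by simp, rfl⟩)⟩

theorem editCost_substitute (a b : α) {q : ℝ} (hq : 0 < q) :
    EditCost wdel wins wsub [(a, q)] [(b, q)] (q * wsub a b) :=
  Step.editCost ⟨[], [], RES.nil, RES.nil,
    Or.inr (Or.inr ⟨a, b, q, hq, by simp, by simp, rfl⟩)⟩

theorem editCost_deleteAll {u : List (α × ℝ)} (hu : RES u) :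
    EditCost wdel wins wsub u [] (runCost wdel u) := by
  induction u with
  | nil => exact .refl
  | cons z t ih =>
    obtain ⟨a, s⟩ := z
    have h := (editCost_delete a (hu.2 (a, s) (by simp))).rcat hu.tail RES.nil (ih hu.tail)
    rwa [singleton_rcat_eq_cons hu.1, rcat_nil] at h

theorem editCost_insertAll {v : List (α × ℝ)} (hv : RES v) :
    EditCost wdel wins wsub [] v (runCost wins v) := by
  induction v with
  | nil => exact .refl
  | cons z t ih =>
    obtain ⟨a, s⟩ := z
    have hs : 0 < s := hv.2 (a, s) (by simp)
    have h := (editCost_insert a hs).rcat RES.nil (RES.singleton a hs) (ih hv.tail)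
    rwa [singleton_rcat_eq_cons hv.1, rcat_nil] at h

theorem editCost_singleton_substitute (a : α) {w : List (α × ℝ)} (hw : RES w) (hne : w ≠ []) :
    EditCost wdel wins wsub [(a, eLen w)] w (runCost (wsub a) w) := by
  induction w with
  | nil => exact absurd rfl hne
  | cons z t ih =>
    obtain ⟨b, s⟩ := z
    have hs : 0 < s := hw.2 (b, s) (by simp)
    rcases eq_or_ne t [] with rfl | ht
    · simpa using editCost_substitute (wdel := wdel) (wins := wins) (wsub := wsub) a b hs
    have h := (editCost_substitute a b hs).rcat (RES.singleton a (hw.tail.eLen_pos ht))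
      (RES.singleton b hs) (ih hw.tail ht)
    rwa [singleton_rcat_cons, if_pos rfl, singleton_rcat_eq_cons hw.1, ← eLen_cons] at h

theorem editCost_substituteAll [Inhabited α] {p q : List (α × ℝ)} (hp : RES p) (hq : RES q)
    (hpq : eLen p = eLen q) :
    EditCost wdel wins wsub p q (∫ x in (0 : ℝ)..eLen p, wsub (charAt p x) (charAt q x)) := by
  induction p generalizing q with
  | nil =>
    obtain rfl : q = [] := by
      by_contra hne
      linarith [hq.eLen_pos hne, eLen_nil (α := α)]
    simpa using EditCost.refl
  | cons z t ih =>
    obtain ⟨a, s⟩ := z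
    have hs : 0 < s := hp.2 (a, s) (by simp)
    have hLt : 0 ≤ eLen t := eLen_nonneg fun x hx => (hp.tail.2 x hx).le
    rw [eLen_cons] at hpq ⊢
    have hB : eLen (eTake s q) = s := eLen_eTake hs.le (by linarith)
    have hC : eLen t = eLen (eDrop s q) := by rw [eLen_eDrop hs.le (by linarith)]; linarith
    have h := (editCost_singleton_substitute a (hq.eTake s)
      (fun he => by rw [he, eLen_nil] at hB; linarith)).rcat hp.tail (hq.eTake s)
      (ih hp.tail (hq.eDrop s) hC)
    rw [hB, singleton_rcat_eq_cons hp.1, rcat_eTake_eDrop hq.1] at h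
    convert h using 1
    rw [← intervalIntegral.integral_add_adjacent_intervals
      (intervalIntegrable_charAt₂ wsub _ _ 0 s) (intervalIntegrable_charAt₂ wsub _ _ s _)]
    congr 1
    · rw [← integral_charAt _ fun x hx => ((hq.eTake s).2 x hx).le, hB]
      refine intervalIntegral.integral_congr_Ioo_of_le hs.le fun x hx => ?_
      simp [charAt_cons, hx.2, charAt_eTake hx.1.le hx.2]
    · rw [intervalIntegral.integral_congr
        (g := fun x => wsub (charAt t (x - s)) (charAt (eDrop s q) (x - s))) (fun x hx => ?_),
        intervalIntegral.integral_comp_sub_right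
          (fun x => wsub (charAt t x) (charAt (eDrop s q) x)), sub_self, add_sub_cancel_left]
      rw [uIcc_of_le (by linarith)] at hx
      simp [charAt_cons, not_lt.mpr hx.1, charAt_eDrop hs.le (sub_nonneg.mpr hx.1)]

end EditCost

/-! ### Matchings -/

section Matching

variable [Inhabited α] {wdel wins : α → ℝ} {wsub : α → α → ℝ}

noncomputable def segDelta (wdel wins : α → ℝ) (wsub : α → α → ℝ) (u v : List (α × ℝ))
    (m : ℝ × ℝ × ℝ) : ℝ :=
  (∫ s in (0 : ℝ)..m.2.2, wsub (charAt u (m.1 + s)) (charAt v (m.2.1 + s))) -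
    (∫ s in (0 : ℝ)..m.2.2, wdel (charAt u (m.1 + s))) -
    ∫ s in (0 : ℝ)..m.2.2, wins (charAt v (m.2.1 + s))

theorem mCost_eq_runCost_add_sum_segDelta {u v : List (α × ℝ)} (hu : RES u) (hv : RES v)
    {M : List (ℝ × ℝ × ℝ)} (hM : IsMatching (eLen u) (eLen v) M) :
    mCost wdel wins wsub u v M =
      runCost wdel u + runCost wins v + (M.map (segDelta wdel wins wsub u v)).sum := by
  obtain ⟨hbd, hdisj, -⟩ := hM
  have hX := setIntegral_diff_biUnion_Ico (I := M) (a := fun m => m.1)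
    (b := fun m => m.1 + m.2.2) (integrableOn_charAt wdel u (s := Ico 0 (eLen u)) (by simp))
    (fun m hm => by linarith [(hbd m hm).1])
    (fun m hm => Ico_subset_Ico (hbd m hm).2.1 (hbd m hm).2.2.2.1) (hdisj.imp And.left)
  have hY := setIntegral_diff_biUnion_Ico (I := M) (a := fun m => m.2.1)
    (b := fun m => m.2.1 + m.2.2) (integrableOn_charAt wins v (s := Ico 0 (eLen v)) (by simp))
    (fun m hm => by linarith [(hbd m hm).1])
    (fun m hm => Ico_subset_Ico (hbd m hm).2.2.1 (hbd m hm).2.2.2.2) (hdisj.imp And.right)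
  simp only [mCost, mEX, mSegX, mEY, mSegY]
  rw [hX, hY, setIntegral_Ico_eq_intervalIntegral (eLen_nonneg fun x hx => (hu.2 x hx).le),
    setIntegral_Ico_eq_intervalIntegral (eLen_nonneg fun x hx => (hv.2 x hx).le),
    integral_charAt _ fun x hx => (hu.2 x hx).le, integral_charAt _ fun x hx => (hv.2 x hx).le]
  have hshift (g : ℝ → ℝ) (c t : ℝ) : ∫ x in c..c + t, g x = ∫ s in (0 : ℝ)..t, g (c + s) := by
    simp
  simp only [hshift]
  clear hX hY hbd hdisj
  induction M with
  | nil => simp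
  | cons m M ih =>
    simp only [List.map_cons, List.sum_cons, segDelta] at ih ⊢
    linarith

def SegPrecedes (m m' : ℝ × ℝ × ℝ) : Prop := m.1 + m.2.2 ≤ m'.1 ∧ m.2.1 + m.2.2 ≤ m'.2.1

theorem IsMatching.segPrecedes {L₁ L₂ : ℝ} {M : List (ℝ × ℝ × ℝ)} (hM : IsMatching L₁ L₂ M)
    {m m' : ℝ × ℝ × ℝ} (hm : m ∈ M) (hm' : m' ∈ M)
    (hdisj : Disjoint (mSegX m) (mSegX m') ∧ Disjoint (mSegY m) (mSegY m'))
    (hle : m.1 ≤ m'.1) : SegPrecedes m m' := by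
  obtain ⟨hbd, -, hmono⟩ := hM
  have hx := add_le_of_disjoint_Ico hdisj.1 hle (hbd m' hm').1
  have hy : m.2.1 ≤ m'.2.1 := by
    simpa using hmono m hm m' hm' 0 0 le_rfl (hbd m hm).1 le_rfl (hbd m' hm').1
      (by linarith [(hbd m hm).1])
  exact ⟨hx, add_le_of_disjoint_Ico hdisj.2 hy (hbd m' hm').1⟩

theorem IsMatching.exists_perm_pairwise_segPrecedes {L₁ L₂ : ℝ} {M : List (ℝ × ℝ × ℝ)}
    (hM : IsMatching L₁ L₂ M) :
    ∃ M' : List (ℝ × ℝ × ℝ), M'.Perm M ∧ M'.Pairwise fun m m' => SegPrecedes m' m := by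
  let le : ℝ × ℝ × ℝ → ℝ × ℝ × ℝ → Bool := fun m m' => decide (m'.1 ≤ m.1)
  have hperm := List.mergeSort_perm M le
  have hsorted := List.pairwise_mergeSort (le := le)
    (fun a b c hab hbc => by simp only [le, decide_eq_true_eq] at *; exact hbc.trans hab)
    (fun a b => by simpa [le] using le_total b.1 a.1) M
  have hdisj := (hperm.pairwise_iff fun h => ⟨h.1.symm, h.2.symm⟩).mpr hM.2.1
  refine ⟨_, hperm, (hsorted.and hdisj).imp_of_mem fun ha hb h => ?_⟩
  exact hM.segPrecedes (hperm.subset hb) (hperm.subset ha) ⟨h.2.1.symm, h.2.2.symm⟩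
    (by simpa [le] using h.1)

theorem segDelta_eTake {u v : List (α × ℝ)} {x y : ℝ} {m : ℝ × ℝ × ℝ} (hm₁ : 0 ≤ m.1)
    (hm₂ : 0 ≤ m.2.1) (ht : 0 ≤ m.2.2) (hx : m.1 + m.2.2 ≤ x) (hy : m.2.1 + m.2.2 ≤ y) :
    segDelta wdel wins wsub (eTake x u) (eTake y v) m = segDelta wdel wins wsub u v m := by
  simp only [segDelta]
  congr 1
  congr 1
  all_goals
    refine intervalIntegral.integral_congr_Ioo_of_le ht fun s hs => ?_
    simp only [charAt_eTake (by linarith [hs.1] : 0 ≤ m.1 + s) (by linarith [hs.2] : m.1 + s < x),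
      charAt_eTake (by linarith [hs.1] : 0 ≤ m.2.1 + s) (by linarith [hs.2] : m.2.1 + s < y)]

theorem segDelta_eDrop {u v : List (α × ℝ)} {x y : ℝ} (hx : 0 ≤ x) (hy : 0 ≤ y) {a b t : ℝ}
    (ha : 0 ≤ a) (hb : 0 ≤ b) (ht : 0 ≤ t) :
    segDelta wdel wins wsub (eDrop x u) (eDrop y v) (a, b, t) =
      segDelta wdel wins wsub u v (x + a, y + b, t) := by
  simp only [segDelta]
  congr 1
  congr 1
  all_goals
    refine intervalIntegral.integral_congr_Ioo_of_le ht fun s hs => ?_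
    simp only [charAt_eDrop hx (by linarith [hs.1] : 0 ≤ a + s),
      charAt_eDrop hy (by linarith [hs.1] : 0 ≤ b + s), add_assoc]

theorem segDelta_zero {u v : List (α × ℝ)} (hu : RES u) (hv : RES v) {t : ℝ} (ht : 0 ≤ t)
    (htu : t ≤ eLen u) (htv : t ≤ eLen v) :
    segDelta wdel wins wsub u v (0, 0, t) =
      (∫ s in (0 : ℝ)..t, wsub (charAt (eTake t u) s) (charAt (eTake t v) s)) -
        runCost wdel (eTake t u) - runCost wins (eTake t v) := by
  rw [← integral_charAt wdel fun x hx => ((hu.eTake t).2 x hx).le, eLen_eTake ht htu,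
    ← integral_charAt wins fun x hx => ((hv.eTake t).2 x hx).le, eLen_eTake ht htv]
  simp only [segDelta, zero_add]
  congr 1
  congr 1
  all_goals
    refine intervalIntegral.integral_congr_Ioo_of_le ht fun s hs => ?_
    simp only [charAt_eTake hs.1.le hs.2]

variable [DecidableEq α]

theorem editCost_of_pairwise_segPrecedes {M : List (ℝ × ℝ × ℝ)}
    (hM : M.Pairwise fun m m' => SegPrecedes m' m) {u v : List (α × ℝ)} (hu : RES u)
    (hv : RES v)
    (hbd : ∀ m ∈ M, 0 < m.2.2 ∧ 0 ≤ m.1 ∧ 0 ≤ m.2.1 ∧ m.1 + m.2.2 ≤ eLen u ∧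
      m.2.1 + m.2.2 ≤ eLen v) :
    EditCost wdel wins wsub u v
      (runCost wdel u + runCost wins v + (M.map (segDelta wdel wins wsub u v)).sum) := by
  induction M generalizing u v with
  | nil => simpa using (editCost_deleteAll hu).trans (editCost_insertAll hv)
  | cons m M ih =>
    obtain ⟨x, y, t⟩ := m
    obtain ⟨ht, hx, hy, hxu, hyv⟩ := hbd _ List.mem_cons_self
    rw [List.pairwise_cons] at hM
    have hRu := hu.eDrop x
    have hRv := hv.eDrop y
    have hLu : eLen (eDrop x u) = eLen u - x := eLen_eDrop hx (by linarith)
    have hLv : eLen (eDrop y v) = eLen v - y := eLen_eDrop hy (by linarith)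
    have hBu : eLen (eTake t (eDrop x u)) = t := eLen_eTake ht.le (by linarith)
    have hBv : eLen (eTake t (eDrop y v)) = t := eLen_eTake ht.le (by linarith)
    have hP := ih hM.2 (hu.eTake x) (hv.eTake y) fun m hm => by
      obtain ⟨ht', hx', hy', -, -⟩ := hbd m (List.mem_cons_of_mem _ hm)
      rw [eLen_eTake hx (by linarith), eLen_eTake hy (by linarith)]
      exact ⟨ht', hx', hy', hM.1 m hm⟩
    have hB := editCost_substituteAll (wdel := wdel) (wins := wins) (wsub := wsub)
      (hRu.eTake t) (hRv.eTake t) (hBu.trans hBv.symm)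
    have hC := (editCost_deleteAll (wdel := wdel) (wins := wins) (wsub := wsub)
      (hRu.eDrop t)).trans (editCost_insertAll (hRv.eDrop t))
    have h := hP.rcat ((hRu.eTake t).rcat (hRu.eDrop t)) (hv.eTake y)
      (hB.rcat (hRu.eDrop t) (hRv.eTake t) hC)
    rw [rcat_eTake_eDrop hRu.1, rcat_eTake_eDrop hu.1, rcat_eTake_eDrop hRv.1,
      rcat_eTake_eDrop hv.1] at h
    convert h using 1
    have hhead : segDelta wdel wins wsub u v (x, y, t) =
        segDelta wdel wins wsub (eDrop x u) (eDrop y v) (0, 0, t) := by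
      simpa using (segDelta_eDrop hx hy le_rfl le_rfl ht.le).symm
    have htail : M.map (segDelta wdel wins wsub (eTake x u) (eTake y v)) =
        M.map (segDelta wdel wins wsub u v) := List.map_congr_left fun m hm => by
      obtain ⟨ht', hx', hy', -, -⟩ := hbd m (List.mem_cons_of_mem _ hm)
      exact segDelta_eTake hx' hy' ht'.le (hM.1 m hm).1 (hM.1 m hm).2
    rw [List.map_cons, List.sum_cons, hhead, segDelta_zero hRu hRv ht.le (by linarith)
      (by linarith), htail, hBu, runCost_eq_eTake_add_eDrop wdel hu.1 x,
      runCost_eq_eTake_add_eDrop wdel hRu.1 t, runCost_eq_eTake_add_eDrop wins hv.1 y,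
      runCost_eq_eTake_add_eDrop wins hRv.1 t]
    ring

theorem editCost_mCost {u v : List (α × ℝ)} (hu : RES u) (hv : RES v)
    {M : List (ℝ × ℝ × ℝ)} (hM : IsMatching (eLen u) (eLen v) M) :
    EditCost wdel wins wsub u v (mCost wdel wins wsub u v M) := by
  obtain ⟨M', hperm, hM'⟩ := hM.exists_perm_pairwise_segPrecedes
  rw [mCost_eq_runCost_add_sum_segDelta hu hv hM, ← (hperm.map _).sum_eq]
  exact editCost_of_pairwise_segPrecedes hM' hu hv fun m hm => hM.1 m (hperm.subset hm)

end Matching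

end ExpStr

open ExpStr in
theorem matching_to_sequence_general {α : Type*} [DecidableEq α] [Inhabited α]
    (wdel wins : α → ℝ) (wsub : α → α → ℝ)
    (hdel : ∀ a, 0 < wdel a) (hins : ∀ a, 0 < wins a)
    (hsub0 : ∀ a, wsub a a = 0) (hsubpos : ∀ a b, a ≠ b → 0 < wsub a b)
    (u v : List (α × ℝ)) (hu : RES u) (hv : RES v) :
    (∀ M : List (ℝ × ℝ × ℝ), IsMatching (eLen u) (eLen v) M →
      EditCost wdel wins wsub u v (mCost wdel wins wsub u v M)) ∧
    sInf {c | EditCost wdel wins wsub u v c} ≤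
      sInf {c | ∃ M : List (ℝ × ℝ × ℝ),
        IsMatching (eLen u) (eLen v) M ∧ c = mCost wdel wins wsub u v M} := by
  have hsub (a b : α) : 0 ≤ wsub a b := by
    rcases eq_or_ne a b with rfl | hab
    exacts [(hsub0 a).ge, (hsubpos a b hab).le]
  refine ⟨fun M hM => editCost_mCost hu hv hM, csInf_le_csInf ?_ ?_ ?_⟩
  · exact ⟨0, fun c hc => hc.nonneg (fun a => (hdel a).le) (fun a => (hins a).le) hsub⟩
  · exact ⟨_, [], ⟨by simp, by simp, by simp⟩, rfl⟩
  · rintro c ⟨M, hM, rfl⟩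
    exact editCost_mCost hu hv hM

open ExpStr in
/-- For every exp-matching `E` from `u` to `v` there is an exp-edit sequence
from `u` to `v` of total cost exactly the cost of `E`; consequently the
infimum of exp-edit sequence costs is at most the infimum of exp-matching
costs. -/
theorem matching_to_sequence {α : Type*} [DecidableEq α] [Inhabited α]
    (wdel wins : α → ℝ) (wsub : α → α → ℝ)
    (hdel : ∀ a, 0 < wdel a) (hins : ∀ a, 0 < wins a)
    (hsub0 : ∀ a, wsub a a = 0) (hsubpos : ∀ a b, a ≠ b → 0 < wsub a b)
    (htri₁ : ∀ a b c, wsub a c ≤ wsub a b + wsub b c)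
    (htri₂ : ∀ a b, wsub a b ≤ wdel a + wins b)
    (htri₃ : ∀ a b, wins b ≤ wins a + wsub a b)
    (htri₄ : ∀ a b, wdel a ≤ wsub a b + wdel b)
    (u v : List (α × ℝ)) (hu : RES u) (hv : RES v) :
    (∀ M : List (ℝ × ℝ × ℝ), IsMatching (eLen u) (eLen v) M →
      EditCost wdel wins wsub u v (mCost wdel wins wsub u v M)) ∧
    sInf {c | EditCost wdel wins wsub u v c} ≤
      sInf {c | ∃ M : List (ℝ × ℝ × ℝ),
        IsMatching (eLen u) (eLen v) M ∧ c = mCost wdel wins wsub u v M} :=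
  matching_to_sequence_general wdel wins wsub hdel hins hsub0 hsubpos u v hu hv
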